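/- Let m > 0 be real, D ≥ 1 an integer, and h : ℝ^{1+D} → ℂ a Schwartz function with Fourier transform ĥ. Then the double integral ∫_{ℝ^D} ∫_{ℝ^D} |ĥ(ω_p + ω_q, p + q)|² dμ_m(p) dμ_m(q) is finite. -/

import Mathlib

/-!
Differentiating `h` in the time variable shows that `ĥ(s, q)` decays faster than any power of `|s|`,
uniformly in `q`. As `ω_p ω_q ≤ (ω_p + ω_q)²`, this gives
`|ĥ(ω_p + ω_q, p + q)|² ≤ C ω_p^{-D} ω_q^{-D}`, so the double integral is at most
`C (∫ ω_p^{-D} dμ_m(p))²`. The density of `μ_m` is a multiple of `ω_p⁻¹`, and since `m > 0` we have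
`ω_p ≳ 1 + |p|`, so `ω_p^{-(D+1)}` is Lebesgue integrable on `ℝ^D`.
-/

open MeasureTheory

/-- `ω_p = √(m² + |p|²)` for `p ∈ ℝ^D`. -/
noncomputable def omegaM {D : ℕ} (m : ℝ) (p : EuclideanSpace ℝ (Fin D)) : ℝ :=
  Real.sqrt (m ^ 2 + ‖p‖ ^ 2)

/-- The measure `μ_m` on `ℝ^D` with density `p ↦ 1/((2π)^D · 2 ω_p)` w.r.t. Lebesgue measure. -/
noncomputable def muM (m : ℝ) (D : ℕ) : Measure (EuclideanSpace ℝ (Fin D)) :=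
  volume.withDensity fun p => ENNReal.ofReal (1 / ((2 * Real.pi) ^ D * (2 * omegaM m p)))

/-- The Fourier transform `ĥ(s, q) = ∫_{ℝ^{1+D}} h(x) e^{−i (s x⁰ + ⟨q, x⟩)} dx` of a function
`h : ℝ^{1+D} → ℂ`, where points of `ℝ^{1+D}` are written as pairs `(x⁰, x) ∈ ℝ × ℝ^D`. -/
noncomputable def fourierHat {D : ℕ} (h : ℝ × EuclideanSpace ℝ (Fin D) → ℂ)
    (s : ℝ) (q : EuclideanSpace ℝ (Fin D)) : ℂ :=
  ∫ x : ℝ × EuclideanSpace ℝ (Fin D),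
    h x * Complex.exp (-Complex.I * ((s * x.1 + (inner ℝ q x.2 : ℝ) : ℝ) : ℂ))

open Real FourierTransform

instance Prod.isAddHaarMeasure_volume {G H : Type*} [AddGroup G] [TopologicalSpace G]
    [MeasureSpace G] [MeasurableAdd G] [(volume : Measure G).IsAddHaarMeasure]
    [SFinite (volume : Measure G)] [AddGroup H] [TopologicalSpace H] [MeasureSpace H]
    [MeasurableAdd H] [(volume : Measure H).IsAddHaarMeasure] [SFinite (volume : Measure H)] :
    (volume : Measure (G × H)).IsAddHaarMeasure :=
  inferInstanceAs ((volume : Measure G).prod volume).IsAddHaarMeasure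

theorem SchwartzMap.exists_abs_pow_mul_norm_fourierIntegral_le {V W E : Type*}
    [NormedAddCommGroup V] [NormedSpace ℝ V] [FiniteDimensional ℝ V] [MeasurableSpace V]
    [BorelSpace V] [NormedAddCommGroup W] [NormedSpace ℝ W] [NormedAddCommGroup E]
    [NormedSpace ℂ E] (μ : Measure V) [μ.IsAddHaarMeasure] (L : V →L[ℝ] W →L[ℝ] ℝ)
    (f : SchwartzMap V E) (v : V) (n : ℕ) :
    ∃ C, ∀ w, |L v w| ^ n * ‖VectorFourier.fourierIntegral 𝐞 μ L.toLinearMap₁₂ f w‖ ≤ C := by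
  have bound := VectorFourier.pow_mul_norm_iteratedFDeriv_fourierIntegral_le L (f.smooth ⊤)
    (fun k j _ _ => f.integrable_pow_mul_iteratedFDeriv μ k j) (K := ⊤) (k := 0) (n := n)
    le_top le_top v
  simp only [norm_iteratedFDeriv_zero] at bound
  exact ⟨_, bound⟩

section FourierHat

noncomputable def prodInnerSL (E : Type*) [NormedAddCommGroup E] [InnerProductSpace ℝ E] :
    (ℝ × E) →L[ℝ] (ℝ × E) →L[ℝ] ℝ :=
  (ContinuousLinearMap.mul ℝ ℝ).bilinearComp (.fst ℝ ℝ E) (.fst ℝ ℝ E) +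
    -- `innerSL ℝ` is typed as conjugate-linear in its first argument; retype it as bilinear
    (show E →L[ℝ] E →L[ℝ] ℝ from innerSL ℝ).bilinearComp (.snd ℝ ℝ E) (.snd ℝ ℝ E)

@[simp]
theorem prodInnerSL_apply {E : Type*} [NormedAddCommGroup E] [InnerProductSpace ℝ E]
    (x y : ℝ × E) : prodInnerSL E x y = x.1 * y.1 + inner ℝ x.2 y.2 :=
  congrArg (x.1 * y.1 + ·) (innerSL_apply_apply ℝ x.2 y.2)

variable {D : ℕ}

theorem fourierHat_eq_fourierIntegral (h : ℝ × EuclideanSpace ℝ (Fin D) → ℂ)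
    (s : ℝ) (q : EuclideanSpace ℝ (Fin D)) :
    fourierHat h s q = VectorFourier.fourierIntegral 𝐞 volume
      (prodInnerSL (EuclideanSpace ℝ (Fin D))).toLinearMap₁₂ h ((2 * π)⁻¹ • (s, q)) := by
  refine integral_congr_ae (Filter.Eventually.of_forall fun x => ?_)
  have hπ : 2 * π ≠ 0 := by positivity
  simp only [Circle.smul_def, Real.fourierChar_apply,
    ContinuousLinearMap.toLinearMap₁₂_apply_apply_apply, prodInnerSL_apply, Prod.smul_fst,
    Prod.smul_snd, smul_eq_mul, real_inner_smul_right, real_inner_comm x.2 q]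
  rw [mul_comm (h x)]
  congr 2
  push_cast
  field_simp

theorem exists_abs_pow_mul_norm_fourierHat_le
    (h : SchwartzMap (ℝ × EuclideanSpace ℝ (Fin D)) ℂ) (n : ℕ) :
    ∃ C, ∀ s q, |s| ^ n * ‖fourierHat h s q‖ ≤ C := by
  obtain ⟨C, hC⟩ := h.exists_abs_pow_mul_norm_fourierIntegral_le volume
    (prodInnerSL (EuclideanSpace ℝ (Fin D))) (1, 0) n
  refine ⟨(2 * π) ^ n * C, fun s q => ?_⟩
  have hπ : 0 < 2 * π := by positivity
  have hpair : prodInnerSL _ (1, 0) ((2 * π)⁻¹ • (s, q)) = (2 * π)⁻¹ * s := by simp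
  have hdecay := hC ((2 * π)⁻¹ • (s, q))
  rw [hpair, abs_mul, abs_of_pos (inv_pos.2 hπ), mul_pow, inv_pow, mul_assoc,
    inv_mul_le_iff₀ (by positivity)] at hdecay
  rwa [fourierHat_eq_fourierIntegral]

end FourierHat

section Omega

variable {D : ℕ} {m : ℝ}

theorem omegaM_pos (hm : 0 < m) (p : EuclideanSpace ℝ (Fin D)) : 0 < omegaM m p :=
  Real.sqrt_pos.2 (by positivity)

theorem continuous_omegaM (m : ℝ) : Continuous (omegaM (D := D) m) := by
  unfold omegaM
  fun_prop

theorem one_add_norm_le_omegaM (hm : 0 < m) (p : EuclideanSpace ℝ (Fin D)) :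
    1 + ‖p‖ ≤ (1 + m) / m * omegaM m p := by
  have hm_le : m ≤ omegaM m p :=
    Real.le_sqrt_of_sq_le (le_add_of_nonneg_right (by positivity))
  have hp_le : ‖p‖ ≤ omegaM m p :=
    Real.le_sqrt_of_sq_le (le_add_of_nonneg_left (by positivity))
  rw [add_div, div_self hm.ne', add_mul, one_div_mul_eq_div, one_mul]
  exact add_le_add ((one_le_div hm).2 hm_le) hp_le

theorem inv_omegaM_pow_le (hm : 0 < m) (n : ℕ) (p : EuclideanSpace ℝ (Fin D)) :
    (omegaM m p ^ n)⁻¹ ≤ ((1 + m) / m) ^ n * (1 + ‖p‖) ^ (-(n : ℝ)) := by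
  rw [Real.rpow_neg (by positivity), Real.rpow_natCast, ← div_eq_mul_inv,
    le_div_iff₀ (by positivity), ← inv_pow, ← mul_pow]
  have hω := omegaM_pos hm p
  refine pow_le_pow_left₀ (mul_nonneg (inv_nonneg.2 hω.le) (by positivity)) ?_ n
  rw [inv_mul_le_iff₀ hω, mul_comm]
  exact one_add_norm_le_omegaM hm p

theorem lintegral_inv_omegaM_pow_lt_top (hm : 0 < m) {n : ℕ} (hn : D < n) :
    ∫⁻ p : EuclideanSpace ℝ (Fin D), ENNReal.ofReal (omegaM m p ^ n)⁻¹ < ⊤ := by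
  have hc : 0 ≤ ((1 + m) / m) ^ n := by positivity
  calc ∫⁻ p, ENNReal.ofReal (omegaM m p ^ n)⁻¹
      ≤ ∫⁻ p, ENNReal.ofReal (((1 + m) / m) ^ n) * ENNReal.ofReal ((1 + ‖p‖) ^ (-(n : ℝ))) :=
        lintegral_mono fun p => by
          rw [← ENNReal.ofReal_mul hc]
          exact ENNReal.ofReal_le_ofReal (inv_omegaM_pow_le hm n p)
    _ = ENNReal.ofReal (((1 + m) / m) ^ n) * ∫⁻ p, ENNReal.ofReal ((1 + ‖p‖) ^ (-(n : ℝ))) :=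
        lintegral_const_mul' _ _ ENNReal.ofReal_ne_top
    _ < ⊤ := ENNReal.mul_lt_top ENNReal.ofReal_lt_top
        (finite_integral_one_add_norm (by simpa using hn))

theorem lintegral_inv_omegaM_pow_muM_lt_top (hm : 0 < m) {n : ℕ} (hn : D ≤ n) :
    ∫⁻ p, ENNReal.ofReal (omegaM m p ^ n)⁻¹ ∂muM m D < ⊤ := by
  have hdensity : Measurable fun p : EuclideanSpace ℝ (Fin D) =>
      ENNReal.ofReal (1 / ((2 * π) ^ D * (2 * omegaM m p))) := by
    have := continuous_omegaM (D := D) m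
    fun_prop
  have hc : 0 ≤ ((2 * π) ^ D * 2)⁻¹ := by positivity
  calc ∫⁻ p, ENNReal.ofReal (omegaM m p ^ n)⁻¹ ∂muM m D
      ≤ ∫⁻ p, ENNReal.ofReal ((2 * π) ^ D * 2)⁻¹ * ENNReal.ofReal (omegaM m p ^ (n + 1))⁻¹ := by
        refine (lintegral_withDensity_le_lintegral_mul _ hdensity _).trans
          (le_of_eq (lintegral_congr fun p => ?_))
        have hω := omegaM_pos hm p
        rw [Pi.mul_apply, ← ENNReal.ofReal_mul (by positivity), ← ENNReal.ofReal_mul hc, pow_succ]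
        congr 1
        field_simp
    _ = ENNReal.ofReal ((2 * π) ^ D * 2)⁻¹ * ∫⁻ p, ENNReal.ofReal (omegaM m p ^ (n + 1))⁻¹ :=
        lintegral_const_mul' _ _ ENNReal.ofReal_ne_top
    _ < ⊤ := ENNReal.mul_lt_top ENNReal.ofReal_lt_top
        (lintegral_inv_omegaM_pow_lt_top hm (Nat.lt_succ_of_le hn))

end Omega

theorem sq_mul_pow_mul_pow_le_of_add_pow_mul_le {a b x C : ℝ} (ha : 0 ≤ a) (hb : 0 ≤ b)
    (hx : 0 ≤ x) {n : ℕ} (h : (a + b) ^ n * x ≤ C) : x ^ 2 * (a ^ n * b ^ n) ≤ C ^ 2 := by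
  have hab : a * b ≤ (a + b) ^ 2 := by nlinarith
  calc x ^ 2 * (a ^ n * b ^ n) = x ^ 2 * (a * b) ^ n := by rw [mul_pow]
    _ ≤ x ^ 2 * ((a + b) ^ 2) ^ n := by gcongr
    _ = ((a + b) ^ n * x) ^ 2 := by rw [← pow_mul, mul_comm 2 n, pow_mul]; ring
    _ ≤ C ^ 2 := pow_le_pow_left₀ (by positivity) h 2

theorem norm_fourierHat_omegaM_sq_le {D : ℕ} {m : ℝ} (hm : 0 < m)
    {h : ℝ × EuclideanSpace ℝ (Fin D) → ℂ} {n : ℕ} {C : ℝ}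
    (hC : ∀ s q, |s| ^ n * ‖fourierHat h s q‖ ≤ C) (p q : EuclideanSpace ℝ (Fin D)) :
    ‖fourierHat h (omegaM m p + omegaM m q) (p + q)‖ ^ 2 ≤
      C ^ 2 * (omegaM m q ^ n)⁻¹ * (omegaM m p ^ n)⁻¹ := by
  have hωp := omegaM_pos hm p
  have hωq := omegaM_pos hm q
  have hsum := hC (omegaM m p + omegaM m q) (p + q)
  rw [abs_of_pos (add_pos hωp hωq)] at hsum
  rw [mul_assoc, ← mul_inv, ← div_eq_mul_inv, le_div_iff₀ (by positivity), mul_comm (_ ^ n)]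
  exact sq_mul_pow_mul_pow_le_of_add_pow_mul_le hωp.le hωq.le (norm_nonneg _) hsum

theorem MeasureTheory.lintegral_lintegral_lt_top_of_le_const_mul_mul {α β : Type*}
    [MeasurableSpace α] [MeasurableSpace β] {μ : Measure α} {ν : Measure β}
    {F : α → β → ENNReal} {f : α → ENNReal} {g : β → ENNReal} {c : ENNReal} (hc : c ≠ ⊤)
    (hF : ∀ a b, F a b ≤ c * f a * g b) (hf : ∫⁻ a, f a ∂μ < ⊤) (hg_meas : AEMeasurable g ν)
    (hg : ∫⁻ b, g b ∂ν < ⊤) : ∫⁻ a, ∫⁻ b, F a b ∂ν ∂μ < ⊤ :=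
  calc ∫⁻ a, ∫⁻ b, F a b ∂ν ∂μ ≤ ∫⁻ a, ∫⁻ b, c * f a * g b ∂ν ∂μ :=
        lintegral_mono fun a => lintegral_mono fun b => hF a b
    _ = c * (∫⁻ a, f a ∂μ) * ∫⁻ b, g b ∂ν := by
        simp_rw [lintegral_const_mul'' _ hg_meas]
        rw [lintegral_mul_const' _ _ hg.ne, lintegral_const_mul' _ _ hc]
    _ < ⊤ := ENNReal.mul_lt_top (ENNReal.mul_lt_top hc.lt_top hf) hg

theorem stmt_17_general (m : ℝ) (hm : 0 < m) (D : ℕ)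
    (h : SchwartzMap (ℝ × EuclideanSpace ℝ (Fin D)) ℂ) :
    (∫⁻ q, ∫⁻ p, ENNReal.ofReal
        (‖fourierHat (⇑h) (omegaM m p + omegaM m q) (p + q)‖ ^ 2)
      ∂(muM m D) ∂(muM m D)) < ⊤ := by
  obtain ⟨C, hC⟩ := exists_abs_pow_mul_norm_fourierHat_le h D
  have hmeas : Measurable fun p => ENNReal.ofReal (omegaM (D := D) m p ^ D)⁻¹ := by
    have := continuous_omegaM (D := D) m
    fun_prop
  have hfin := lintegral_inv_omegaM_pow_muM_lt_top hm (le_refl D)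
  refine lintegral_lintegral_lt_top_of_le_const_mul_mul (c := ENNReal.ofReal (C ^ 2))
    ENNReal.ofReal_ne_top (fun q p => ?_) hfin hmeas.aemeasurable hfin
  have hωq := omegaM_pos hm q
  rw [← ENNReal.ofReal_mul (by positivity), ← ENNReal.ofReal_mul (by positivity)]
  exact ENNReal.ofReal_le_ofReal (norm_fourierHat_omegaM_sq_le hm hC p q)

/-- for a Schwartz function `h : ℝ^{1+D} → ℂ`, the double integral
`∫∫ |ĥ(ω_p + ω_q, p + q)|² dμ_m(p) dμ_m(q)` is finite. -/
theorem stmt_17 (m : ℝ) (hm : 0 < m) (D : ℕ) (hD : 1 ≤ D)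
    (h : SchwartzMap (ℝ × EuclideanSpace ℝ (Fin D)) ℂ) :
    (∫⁻ q, ∫⁻ p, ENNReal.ofReal
        (‖fourierHat (⇑h) (omegaM m p + omegaM m q) (p + q)‖ ^ 2)
      ∂(muM m D) ∂(muM m D)) < ⊤ :=
  stmt_17_general m hm D h
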